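/- For V, w, T, χ as above and c ∈ {0,…,|V|}, define M*(c) = min over 2-colorings φ with |φ⁻¹(0)| = c of M(φ) (the heaviest φ-monochromatic tree edge, −∞ if none). Then the minimum of diam(φ) over all 2-colorings φ with |φ⁻¹(0)| = c equals max(diam(χ), M*(c)). -/

import Mathlib

/-!
Cycle property: if `T` is a maximum spanning tree, every edge on the `T`-path from `u` to `v`
weighs at least `w s(u, v)`, since swapping it for `s(u, v)` yields another spanning tree.
Along a tree path without `φ`-monochromatic edges, `φ` alternates just like the proper coloring
`χ`, so its ends are `φ`-monochromatic iff they are `χ`-monochromatic. Hence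
`diam φ = max (diam χ) (M φ)` for every `φ`, and `max (diam χ)` commutes with the infimum.
-/

open SimpleGraph

/-- Total weight of a graph's edges. -/
noncomputable def edgeWeightSum {V : Type*} [Fintype V] (w : Sym2 V → ℝ)
    (G : SimpleGraph V) : ℝ :=
  ∑ e ∈ G.edgeSet.toFinite.toFinset, w e

/-- `pdiam w φ` : the partition diameter of the 2-coloring `φ`, i.e. the maximum
weight over `φ`-monochromatic pairs of distinct vertices (`⊥` if none). -/
noncomputable def pdiam {V : Type*} [Fintype V] [DecidableEq V]
    (w : Sym2 V → ℝ) (φ : V → Fin 2) : EReal :=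
  Finset.sup (Finset.univ.filter fun uv : V × V => uv.1 ≠ uv.2 ∧ φ uv.1 = φ uv.2)
    fun uv => (w s(uv.1, uv.2) : EReal)

/-- `treeM w T φ` : the maximum weight over `φ`-monochromatic edges of `T`
(`⊥` if none). -/
noncomputable def treeM {V : Type*} [Fintype V] [DecidableEq V]
    (w : Sym2 V → ℝ) (T : SimpleGraph V) [DecidableRel T.Adj] (φ : V → Fin 2) : EReal :=
  Finset.sup (Finset.univ.filter fun uv : V × V => T.Adj uv.1 uv.2 ∧ φ uv.1 = φ uv.2)
    fun uv => (w s(uv.1, uv.2) : EReal)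

/-- Size of color class `0` of a 2-coloring. -/
def card0 {V : Type*} [Fintype V] [DecidableEq V] (φ : V → Fin 2) : ℕ :=
  (Finset.univ.filter fun v => φ v = 0).card

namespace SimpleGraph

variable {V : Type*} {G : SimpleGraph V} {u v x y : V}

theorem Walk.reachable_deleteEdges_or (p : G.Walk u x) :
    (G.deleteEdges {s(x, y)}).Reachable u x ∨ (G.deleteEdges {s(x, y)}).Reachable u y := by
  induction p with
  | nil => exact Or.inl .rfl
  | @cons a c z hac _ ih =>
    by_cases he : s(a, c) = s(z, y)
    · rcases Sym2.eq_iff.mp he with ⟨rfl, -⟩ | ⟨rfl, -⟩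
      · exact Or.inl .rfl
      · exact Or.inr .rfl
    · have hac' : (G.deleteEdges {s(z, y)}).Adj a c := deleteEdges_adj.mpr ⟨hac, he⟩
      exact ih.imp hac'.reachable.trans hac'.reachable.trans

/-- After deleting `s(x, y)` every vertex is still joined to `x` or to `y`, and `u`, `v` lie on
different sides. -/
theorem Connected.connected_deleteEdges_sup_edge (hG : G.Connected)
    (huv : ¬(G.deleteEdges {s(x, y)}).Reachable u v) :
    (G.deleteEdges {s(x, y)} ⊔ edge u v).Connected := by
  set D := G.deleteEdges {s(x, y)}
  have hD : D ≤ D ⊔ edge u v := le_sup_left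
  have hside (a : V) : D.Reachable a x ∨ D.Reachable a y :=
    ((hG.preconnected a x).some).reachable_deleteEdges_or
  have hedge : (D ⊔ edge u v).Reachable u v :=
    Adj.reachable (Or.inr ((edge_adj u v u v).mpr ⟨Or.inl ⟨rfl, rfl⟩, fun h => huv (h ▸ .rfl)⟩))
  have hyx : (D ⊔ edge u v).Reachable y x := by
    rcases hside u with hu | hu <;> rcases hside v with hv | hv
    · exact absurd (hu.trans hv.symm) huv
    · exact (hv.symm.mono hD).trans (hedge.symm.trans (hu.mono hD))
    · exact (hu.symm.mono hD).trans (hedge.trans (hv.mono hD))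
    · exact absurd (hu.trans hv.symm) huv
  refine (connected_iff_exists_forall_reachable _).mpr ⟨x, fun a => ?_⟩
  rcases hside a with ha | ha
  · exact (ha.mono hD).symm
  · exact hyx.symm.trans (ha.mono hD).symm

theorem IsTree.isTree_deleteEdges_sup_edge (hG : G.IsTree)
    (huv : ¬(G.deleteEdges {s(x, y)}).Reachable u v) :
    (G.deleteEdges {s(x, y)} ⊔ edge u v).IsTree :=
  ⟨hG.connected.connected_deleteEdges_sup_edge huv,
    (hG.isAcyclic.anti (deleteEdges_le _)).sup_edge_of_not_reachable huv⟩

theorem IsAcyclic.not_reachable_deleteEdges_of_mem_edges (hG : G.IsAcyclic) {p : G.Walk u v}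
    (hp : p.IsPath) (he : s(x, y) ∈ p.edges) : ¬(G.deleteEdges {s(x, y)}).Reachable u v := by
  classical
  intro h
  obtain ⟨q, hq⟩ := reachable_deleteEdges_iff_exists_walk.mp h
  have hpq : (⟨p, hp⟩ : G.Path u v) = q.toPath := (hG.subsingleton_path u v).elim _ _
  exact hq (q.edges_toPath_subset_edges (congrArg Subtype.val hpq ▸ he))

theorem Walk.eq_iff_eq_of_forall_ne {χ φ : V → Fin 2} (hχ : ∀ a b, G.Adj a b → χ a ≠ χ b)
    (p : G.Walk u v) (hφ : ∀ a b, s(a, b) ∈ p.edges → φ a ≠ φ b) :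
    (φ u = φ v ↔ χ u = χ v) := by
  induction p with
  | nil => exact iff_of_true rfl rfl
  | @cons a c _ hac _ ih =>
    have flip : ∀ pa pc pv ca cc cv : Fin 2,
        pa ≠ pc → ca ≠ cc → (pc = pv ↔ cc = cv) → (pa = pv ↔ ca = cv) := by decide
    exact flip _ _ _ _ _ _ (hφ a c (by simp)) (hχ a c hac)
      (ih fun a b hab => hφ a b (by simp [hab]))

end SimpleGraph

section Coloring

variable {V : Type*} [Fintype V] [DecidableEq V] (w : Sym2 V → ℝ)

theorem le_pdiam {φ : V → Fin 2} {u v : V} (huv : u ≠ v) (h : φ u = φ v) :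
    (w s(u, v) : EReal) ≤ pdiam w φ :=
  Finset.le_sup (f := fun uv : V × V => (w s(uv.1, uv.2) : EReal)) (b := (u, v))
    (by simp [huv, h])

theorem pdiam_le_iff {φ : V → Fin 2} {d : EReal} :
    pdiam w φ ≤ d ↔ ∀ u v, u ≠ v → φ u = φ v → (w s(u, v) : EReal) ≤ d := by
  simp [pdiam, Finset.sup_le_iff]

theorem le_treeM (T : SimpleGraph V) [DecidableRel T.Adj] {φ : V → Fin 2} {u v : V}
    (huv : T.Adj u v) (h : φ u = φ v) : (w s(u, v) : EReal) ≤ treeM w T φ :=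
  Finset.le_sup (f := fun uv : V × V => (w s(uv.1, uv.2) : EReal)) (b := (u, v))
    (by simp [huv, h])

theorem treeM_le_iff (T : SimpleGraph V) [DecidableRel T.Adj] {φ : V → Fin 2} {d : EReal} :
    treeM w T φ ≤ d ↔ ∀ u v, T.Adj u v → φ u = φ v → (w s(u, v) : EReal) ≤ d := by
  simp [treeM, Finset.sup_le_iff]

theorem edgeWeightSum_deleteEdges_sup_edge {G : SimpleGraph V} {x y u v : V}
    (hxy : G.Adj x y) (huv : u ≠ v) (hnadj : ¬(G.deleteEdges {s(x, y)}).Adj u v) :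
    edgeWeightSum w (G.deleteEdges {s(x, y)} ⊔ edge u v) + w s(x, y) =
      edgeWeightSum w G + w s(u, v) := by
  have hE : (G.deleteEdges {s(x, y)} ⊔ edge u v).edgeSet.toFinite.toFinset =
      insert s(u, v) (G.edgeSet.toFinite.toFinset.erase s(x, y)) := by
    ext e
    simp only [Set.Finite.mem_toFinset, Finset.mem_insert, Finset.mem_erase, edgeSet_sup,
      edgeSet_deleteEdges, edgeSet_edge_of_ne huv, Set.mem_union, Set.mem_sdiff,
      Set.mem_singleton_iff]
    tauto
  have hnotin : s(u, v) ∉ G.edgeSet.toFinite.toFinset.erase s(x, y) := by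
    simpa [deleteEdges_adj, and_comm] using hnadj
  have hxy_mem : s(x, y) ∈ G.edgeSet.toFinite.toFinset := by simpa using hxy
  rw [edgeWeightSum, edgeWeightSum, hE, Finset.sum_insert hnotin,
    Finset.sum_erase_eq_sub hxy_mem]
  ring

variable (T : SimpleGraph V) (hT : T.IsTree)
  (hmax : ∀ T' : SimpleGraph V, T'.IsTree → edgeWeightSum w T' ≤ edgeWeightSum w T)
include hT hmax

/-- `T - s(x, y) + s(u, v)` is again a spanning tree, so it weighs no more than `T`. -/
theorem weight_le_of_not_reachable_deleteEdges {x y u v : V} (hxy : T.Adj x y)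
    (huv : ¬(T.deleteEdges {s(x, y)}).Reachable u v) : w s(u, v) ≤ w s(x, y) := by
  by_cases hadj : (T.deleteEdges {s(x, y)}).Adj u v
  · exact absurd hadj.reachable huv
  have hne : u ≠ v := fun h => huv (h ▸ .rfl)
  have := hmax _ (hT.isTree_deleteEdges_sup_edge huv)
  have := edgeWeightSum_deleteEdges_sup_edge w hxy hne hadj
  linarith

theorem weight_le_of_mem_edges {u v x y : V} {p : T.Walk u v} (hp : p.IsPath)
    (he : s(x, y) ∈ p.edges) : w s(u, v) ≤ w s(x, y) :=
  weight_le_of_not_reachable_deleteEdges w T hT hmax (p.adj_of_mem_edges he)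
    (hT.isAcyclic.not_reachable_deleteEdges_of_mem_edges hp he)

theorem iff_or_exists_adj_weight_le {χ : V → Fin 2} (hχ : ∀ a b, T.Adj a b → χ a ≠ χ b)
    (φ : V → Fin 2) (u v : V) :
    (φ u = φ v ↔ χ u = χ v) ∨ ∃ a b, T.Adj a b ∧ φ a = φ b ∧ w s(u, v) ≤ w s(a, b) := by
  obtain ⟨p, hp, -⟩ := hT.existsUnique_path u v
  by_cases hφ : ∀ a b, s(a, b) ∈ p.edges → φ a ≠ φ b
  · exact Or.inl (p.eq_iff_eq_of_forall_ne hχ hφ)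
  · push Not at hφ
    obtain ⟨a, b, hab, hmono⟩ := hφ
    exact Or.inr ⟨a, b, p.adj_of_mem_edges hab, hmono,
      weight_le_of_mem_edges w T hT hmax hp hab⟩

theorem pdiam_eq_max_treeM [DecidableRel T.Adj] {χ : V → Fin 2}
    (hχ : ∀ a b, T.Adj a b → χ a ≠ χ b) (φ : V → Fin 2) :
    pdiam w φ = max (pdiam w χ) (treeM w T φ) := by
  refine le_antisymm ?_ (max_le ?_ ?_)
  · refine (pdiam_le_iff w).mpr fun u v huv hφ => ?_
    rcases iff_or_exists_adj_weight_le w T hT hmax hχ φ u v with h | ⟨a, b, hab, hmono, hle⟩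
    · exact (le_pdiam w huv (h.mp hφ)).trans (le_max_left _ _)
    · exact (EReal.coe_le_coe_iff.mpr hle).trans
        ((le_treeM w T hab hmono).trans (le_max_right _ _))
  · refine (pdiam_le_iff w).mpr fun u v huv hχuv => ?_
    rcases iff_or_exists_adj_weight_le w T hT hmax hχ φ u v with h | ⟨a, b, hab, hmono, hle⟩
    · exact le_pdiam w huv (h.mpr hχuv)
    · exact (EReal.coe_le_coe_iff.mpr hle).trans (le_pdiam w hab.ne hmono)
  · exact (treeM_le_iff w T).mpr fun u v huv h => le_pdiam w huv.ne h

end Coloring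

theorem sInf_setOf_eq_max {ι α : Type*} [CompleteLinearOrder α] {P : ι → Prop} {f g : ι → α}
    {a : α} (hg : ∀ i, g i = max a (f i)) :
    sInf {d | ∃ i, P i ∧ d = g i} = max a (sInf {d | ∃ i, P i ∧ d = f i}) := by
  have himage (h : ι → α) : {d | ∃ i, P i ∧ d = h i} = h '' {i | P i} := by
    ext; simp [eq_comm]
  rw [himage, himage, sInf_image, sInf_image, funext hg]
  exact (sup_iInf₂_eq a).symm

theorem stmt_9_general {V : Type*} [Fintype V] [DecidableEq V] (w : Sym2 V → ℝ)
    (T : SimpleGraph V) [DecidableRel T.Adj] (hT : T.IsTree)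
    (hmax : ∀ T' : SimpleGraph V, T'.IsTree → edgeWeightSum w T' ≤ edgeWeightSum w T)
    (χ : V → Fin 2) (hχ : ∀ a b, T.Adj a b → χ a ≠ χ b)
    (c : ℕ) :
    sInf {d : EReal | ∃ φ : V → Fin 2, card0 φ = c ∧ d = pdiam w φ} =
      max (pdiam w χ)
        (sInf {m : EReal | ∃ φ : V → Fin 2, card0 φ = c ∧ m = treeM w T φ}) :=
  sInf_setOf_eq_max (pdiam_eq_max_treeM w T hT hmax hχ)

/-- The optimum partition diameter at cardinality `c` equals
`max (diam χ) (M*(c))`, where `M*(c)` is the minimum heaviest monochromatic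
tree edge over cardinality-`c` colorings. -/
theorem stmt_9 {V : Type*} [Fintype V] [DecidableEq V] (w : Sym2 V → ℝ)
    (T : SimpleGraph V) [DecidableRel T.Adj] (hT : T.IsTree)
    (hmax : ∀ T' : SimpleGraph V, T'.IsTree → edgeWeightSum w T' ≤ edgeWeightSum w T)
    (χ : V → Fin 2) (hχ : ∀ a b, T.Adj a b → χ a ≠ χ b)
    (c : ℕ) (hc : c ≤ Fintype.card V) :
    sInf {d : EReal | ∃ φ : V → Fin 2, card0 φ = c ∧ d = pdiam w φ} =
      max (pdiam w χ)
        (sInf {m : EReal | ∃ φ : V → Fin 2, card0 φ = c ∧ m = treeM w T φ}) :=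
  stmt_9_general w T hT hmax χ hχ c
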